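/- Let P ∈ ℚ⟦X⟧ be the formal power series with constant coefficient 1 satisfying P = 1 + 3·X·P², and let y := X·(P·(4 − P)/3)² ∈ ℚ⟦X⟧. Let W ∈ ℚ⟦X⟧ be the unique formal power series with zero constant coefficient satisfying (P − 1)·(W² + W + 1) = 3·W, and let Y ∈ ℚ⟦T⟧ be the unique formal power series with zero constant coefficient satisfying (Q − 1)·(Y² + 1) = Y, where Q ∈ ℚ⟦T⟧ has constant coefficient 1 and satisfies Q = 1 + T·Q³. Then the substitution of y into Y equals W in ℚ⟦X⟧. -/

import Mathlib

/-! Eliminating `P` from its two equations gives the rational parametrisation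
`y = W (W² + 1)² / (W² + W + 1)³`. Hence `1 + q` with `q = W / (W² + 1)` solves `R = 1 + y R³`,
which characterises `Q ∘ y`, so `Y ∘ y` and `W` both solve `Z = q (Z² + 1)`; as `q(0) = 0`, this
equation has only one solution. -/

open PowerSeries

/-- Substitution of the power series `f` (assumed to have zero constant coefficient)
into the power series `g`. -/
noncomputable def substInto (f g : PowerSeries ℚ) : PowerSeries ℚ :=
  PowerSeries.mk fun n =>
    PowerSeries.coeff n (Polynomial.aeval f (PowerSeries.trunc (n + 1) g))

theorem mul_eq_mul_one_add_mul_pow_three_of_mul_eq_one {R : Type*} [CommRing R] {y W u : R}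
    (hu : u * (W ^ 2 + 1) = 1) (h : y * (W ^ 2 + W + 1) ^ 3 = W * (W ^ 2 + 1) ^ 2) :
    W * u = y * (1 + W * u) ^ 3 := by
  linear_combination (-u ^ 3) * h + (y * ((1 + W * u) ^ 2 + (1 + W * u) * (u * (W ^ 2 + W + 1))
    + (u * (W ^ 2 + W + 1)) ^ 2) - W * u * (u * (W ^ 2 + 1) + 1)) * hu

namespace PowerSeries

variable {R : Type*} [CommRing R]

theorem eq_zero_of_eq_mul_of_constantCoeff_eq_zero {d e : R⟦X⟧} (he : constantCoeff e = 0)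
    (h : d = e * d) : d = 0 := by
  have hunit : IsUnit (1 - e) := isUnit_iff_constantCoeff.mpr (by simp [he])
  exact hunit.mul_right_eq_zero.mp (by linear_combination h)

theorem eq_of_eq_one_add_mul_pow_three {y A B : R⟦X⟧} (hy : constantCoeff y = 0)
    (hA : A = 1 + y * A ^ 3) (hB : B = 1 + y * B ^ 3) : A = B :=
  sub_eq_zero.mp <| eq_zero_of_eq_mul_of_constantCoeff_eq_zero
    (e := y * (A ^ 2 + A * B + B ^ 2)) (by simp [hy]) (by linear_combination hA - hB)

theorem eq_of_mul_sq_add_one_eq {q Z W : R⟦X⟧} (hq : constantCoeff q = 0)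
    (hZ : q * (Z ^ 2 + 1) = Z) (hW : q * (W ^ 2 + 1) = W) : Z = W :=
  sub_eq_zero.mp <| eq_zero_of_eq_mul_of_constantCoeff_eq_zero
    (e := q * (Z + W)) (by simp [hq]) (by linear_combination hW - hZ)

end PowerSeries

theorem substInto_eq_subst {f : ℚ⟦X⟧} (hf : constantCoeff f = 0) (g : ℚ⟦X⟧) :
    substInto f g = g.subst f := by
  have hsubst : HasSubst f := HasSubst.of_constantCoeff_zero' hf
  ext n
  have htail : coeff n (f ^ (n + 1) * (mk fun i ↦ coeff (i + (n + 1)) g).subst f) = 0 := by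
    have hdvd : X ^ (n + 1) ∣ f ^ (n + 1) * (mk fun i ↦ coeff (i + (n + 1)) g).subst f :=
      (pow_dvd_pow_of_dvd (X_dvd_iff.mpr hf) _).mul_right _
    exact X_pow_dvd_iff.mp hdvd n n.lt_succ_self
  conv_rhs => rw [eq_X_pow_mul_shift_add_trunc (n + 1) g]
  rw [subst_add hsubst, subst_mul hsubst, subst_pow hsubst, subst_X hsubst, map_add, htail,
    zero_add, subst_coe hsubst, substInto, coeff_mk]

theorem X_mul_sq_mul_cube_eq {P W : ℚ⟦X⟧} (hP : P = 1 + 3 * X * P ^ 2)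
    (hW : (P - 1) * (W ^ 2 + W + 1) = 3 * W) :
    X * (P * (4 - P) * (3 : ℚ⟦X⟧)⁻¹) ^ 2 * (W ^ 2 + W + 1) ^ 3 = W * (W ^ 2 + 1) ^ 2 := by
  have hthird : (3 : ℚ⟦X⟧)⁻¹ * 3 = 1 := PowerSeries.inv_mul_cancel _ (by norm_num [map_ofNat])
  have hXP : X * P ^ 2 * (W ^ 2 + W + 1) = W := by
    linear_combination (3 : ℚ⟦X⟧)⁻¹ * (hW - (W ^ 2 + W + 1) * hP)
      - (X * P ^ 2 * (W ^ 2 + W + 1) - W) * hthird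
  have h4P : (4 - P) * (W ^ 2 + W + 1) = 3 * (W ^ 2 + 1) := by linear_combination -hW
  linear_combination (3 : ℚ⟦X⟧)⁻¹ ^ 2 * ((4 - P) * (W ^ 2 + W + 1)) ^ 2 * hXP
    + (3 : ℚ⟦X⟧)⁻¹ ^ 2 * W * ((4 - P) * (W ^ 2 + W + 1) + 3 * (W ^ 2 + 1)) * h4P
    + W * (W ^ 2 + 1) ^ 2 * (3 * (3 : ℚ⟦X⟧)⁻¹ + 1) * hthird

theorem subst_X_series_quad_general
    (P Q W Y : PowerSeries ℚ)
    (hP : P = 1 + 3 * X * P ^ 2)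
    (hQ : Q = 1 + X * Q ^ 3)
    (hW0 : constantCoeff W = 0) (hW : (P - 1) * (W ^ 2 + W + 1) = 3 * W)
    (hY : (Q - 1) * (Y ^ 2 + 1) = Y) :
    substInto (X * (P * (4 - P) * (3 : PowerSeries ℚ)⁻¹) ^ 2) Y = W := by
  set y := X * (P * (4 - P) * (3 : PowerSeries ℚ)⁻¹) ^ 2
  have hy0 : constantCoeff y = 0 := by simp [y]
  have hy : HasSubst y := HasSubst.of_constantCoeff_zero' hy0
  set φ : ℚ⟦X⟧ →ₐ[ℚ] ℚ⟦X⟧ := substAlgHom hy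
  set u := (W ^ 2 + 1)⁻¹
  have hu : u * (W ^ 2 + 1) = 1 := PowerSeries.inv_mul_cancel _ (by simp [hW0])
  have hQy : φ Q = 1 + W * u := by
    refine eq_of_eq_one_add_mul_pow_three hy0 ?_ ?_
    · simpa only [map_add, map_mul, map_pow, map_one, φ, substAlgHom_X] using congrArg φ hQ
    · linear_combination mul_eq_mul_one_add_mul_pow_three_of_mul_eq_one hu
        (X_mul_sq_mul_cube_eq hP hW)
  have hYy : W * u * (φ Y ^ 2 + 1) = φ Y := by
    simpa only [map_mul, map_add, map_sub, map_pow, map_one, hQy, add_sub_cancel_left]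
      using congrArg φ hY
  rw [substInto_eq_subst hy0, ← coe_substAlgHom hy]
  exact eq_of_mul_sq_add_one_eq (by simp [hW0]) hYy (by linear_combination W * hu)

/-- Let `P(0) = 1` with `P = 1 + 3XP²` and `y := X·(P·(4−P)/3)²`. Let `W(0) = 0`
satisfy `(P−1)·(W² + W + 1) = 3W` and `Y(0) = 0` satisfy `(Q−1)·(Y² + 1) = Y`,
where `Q(0) = 1` and `Q = 1 + T·Q³`. Then substituting `y` into `Y` gives `W`. -/
theorem subst_X_series_quad
    (P Q W Y : PowerSeries ℚ)
    (hP0 : constantCoeff P = 1) (hP : P = 1 + 3 * X * P ^ 2)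
    (hQ0 : constantCoeff Q = 1) (hQ : Q = 1 + X * Q ^ 3)
    (hW0 : constantCoeff W = 0) (hW : (P - 1) * (W ^ 2 + W + 1) = 3 * W)
    (hY0 : constantCoeff Y = 0) (hY : (Q - 1) * (Y ^ 2 + 1) = Y) :
    substInto (X * (P * (4 - P) * (3 : PowerSeries ℚ)⁻¹) ^ 2) Y = W :=
  subst_X_series_quad_general P Q W Y hP hQ hW0 hW hY
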